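/- (Lemma 3.1) Let L be a non-metabelian graded Lie algebra of maximal class over a field F, with setup elements x, y, first constituent length ℓ, and constituent lengths ℓ = ℓ_1, ℓ_2, ℓ_3, … as in the recursive definition. Then ℓ_r ≥ ℓ/2 for all r ≥ 1. -/
import Mathlib


/-- Left-normed bracket of `a` with `n` copies of `b`:
`lnb a b n = [a b … b]` with `n` occurrences of `b`. -/
def lnb {L : Type*} [LieRing L] (a b : L) : ℕ → L
  | 0 => a
  | n + 1 => ⁅lnb a b n, b⁆

/-- `Lc` is a grading of `L` (indexed by `ℕ`, with trivial component in degree `0`)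
making `L` an (infinite-dimensional) graded Lie algebra of maximal class:
`L` is the internal direct sum of the `Lc i`, `⁅Lc i, Lc j⁆ ⊆ Lc (i+j)`,
`dim (Lc 1) = 2`, `dim (Lc i) = 1` for `i ≥ 2`, and
`Lc (i+1) = span {⁅u, w⁆ : u ∈ Lc i, w ∈ Lc 1}` for `i ≥ 1`. -/
structure IsMaxClassGrading (F : Type*) [Field F] (L : Type*) [LieRing L] [LieAlgebra F L]
    (Lc : ℕ → Submodule F L) : Prop where
  zero : Lc 0 = ⊥
  internal : DirectSum.IsInternal Lc
  bracket_mem : ∀ i j : ℕ, ∀ u ∈ Lc i, ∀ w ∈ Lc j, ⁅u, w⁆ ∈ Lc (i + j)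
  dim_one : Module.finrank F (Lc 1) = 2
  dim_rest : ∀ i : ℕ, 2 ≤ i → Module.finrank F (Lc i) = 1
  gen : ∀ i : ℕ, 1 ≤ i →
    Lc (i + 1) = Submodule.span F {z | ∃ u ∈ Lc i, ∃ w ∈ Lc 1, z = ⁅u, w⁆}

/-- The standard setup for a non-metabelian graded Lie algebra of maximal class:
`y ∈ L_1` is nonzero and centralizes `L_2`, `x ∈ L_1` is not a scalar multiple of `y`,
the first constituent length `ℓ` is positive with `[y x^i y] = 0` for `0 ≤ i < ℓ−1` and
`[y x^{ℓ−1} y] ≠ 0`, and `x` is normalized so that `[y x^ℓ] = 0`. -/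
structure MaxClassSetup {F : Type*} [Field F] {L : Type*} [LieRing L] [LieAlgebra F L]
    (Lc : ℕ → Submodule F L) (x y : L) (ℓ : ℕ) : Prop where
  y_mem : y ∈ Lc 1
  y_ne : y ≠ 0
  y_central : ∀ u ∈ Lc 2, ⁅u, y⁆ = 0
  x_mem : x ∈ Lc 1
  x_not_mul : ∀ c : F, x ≠ c • y
  ell_pos : 0 < ℓ
  first_const : ∀ i : ℕ, i < ℓ - 1 → ⁅lnb y x i, y⁆ = 0
  first_const_ne : ⁅lnb y x (ℓ - 1), y⁆ ≠ 0
  normalized : lnb y x ℓ = 0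

/-- The sequences `(ℓ_r)_{r≥1}` of constituent lengths and `(v_r)_{r≥1}` of
distinguished homogeneous elements: `ℓ_1 = ℓ`, `v_1 = [y x^{ℓ−1}]`, and for `r ≥ 2`,
`ℓ_r > 0`, `[v_{r−1} y x^i y] = 0` for `0 ≤ i < ℓ_r − 1`,
`v_r = [v_{r−1} y x^{ℓ_r − 1}]`, and `[v_r y] ≠ 0`. -/
structure ConstituentSeq {L : Type*} [LieRing L]
    (x y : L) (ℓ : ℕ) (l : ℕ → ℕ) (v : ℕ → L) : Prop where
  l_one : l 1 = ℓ
  v_one : v 1 = lnb y x (ℓ - 1)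
  l_pos : ∀ r : ℕ, 2 ≤ r → 0 < l r
  const : ∀ r : ℕ, 2 ≤ r → ∀ i : ℕ, i < l r - 1 → ⁅lnb ⁅v (r - 1), y⁆ x i, y⁆ = 0
  v_def : ∀ r : ℕ, 2 ≤ r → v r = lnb ⁅v (r - 1), y⁆ x (l r - 1)
  const_end : ∀ r : ℕ, 2 ≤ r → ⁅v r, y⁆ ≠ 0



section AuxProof

variable {L : Type*} [LieRing L]

theorem lnb_succ (a b : L) (n : ℕ) : lnb a b (n + 1) = ⁅lnb a b n, b⁆ := rfl

theorem lnb_zero_elem (b : L) : ∀ n : ℕ, lnb (0 : L) b n = 0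
  | 0 => rfl
  | n + 1 => by rw [lnb_succ, lnb_zero_elem b n, zero_lie]

theorem lnb_add (a b : L) (m : ℕ) : ∀ n : ℕ, lnb a b (m + n) = lnb (lnb a b m) b n
  | 0 => rfl
  | n + 1 => by rw [← Nat.add_assoc, lnb_succ, lnb_succ, lnb_add a b m n]

theorem lnb_bracket (t b : L) (j : ℕ) : lnb ⁅t, b⁆ b j = lnb t b (j + 1) := by
  have h := (lnb_add t b 1 j).symm
  rw [Nat.add_comm 1 j] at h
  exact h

theorem sum_lie' {α : Type*} (s : Finset α) (f : α → L) (m : L) :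
    ⁅∑ a ∈ s, f a, m⁆ = ∑ a ∈ s, ⁅f a, m⁆ :=
  map_sum (AddMonoidHom.mk' (fun z => ⁅z, m⁆) (fun a b => add_lie a b m)) f s

theorem lie_lnb_expand (x y : L) : ∀ (i : ℕ) (t : L),
    ⁅t, lnb y x i⁆ = ∑ j ∈ Finset.range (i + 1),
      ((-1 : ℤ) ^ j * (i.choose j : ℤ)) • lnb ⁅lnb t x j, y⁆ x (i - j) := by
  intro i
  induction i with
  | zero =>
    intro t
    simp [lnb]
  | succ i ih =>
    intro t
    have hA : ⁅t, lnb y x (i + 1)⁆ = ⁅⁅t, lnb y x i⁆, x⁆ - ⁅⁅t, x⁆, lnb y x i⁆ := by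
      rw [lnb_succ, leibniz_lie, ← lie_skew (lnb y x i) ⁅t, x⁆, sub_eq_add_neg]
    rw [hA, ih t, ih ⁅t, x⁆, sum_lie']
    have e1 : ∑ j ∈ Finset.range (i + 1),
        ⁅((-1 : ℤ) ^ j * (i.choose j : ℤ)) • lnb ⁅lnb t x j, y⁆ x (i - j), x⁆ =
        ∑ j ∈ Finset.range (i + 1),
        ((-1 : ℤ) ^ j * (i.choose j : ℤ)) • lnb ⁅lnb t x j, y⁆ x (i + 1 - j) := by
      refine Finset.sum_congr rfl (fun j hj => ?_)
      have hj' : j ≤ i := Nat.lt_succ_iff.mp (Finset.mem_range.mp hj)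
      rw [zsmul_lie]
      congr 1
      rw [show i + 1 - j = (i - j) + 1 by omega]
      rfl
    have e2 : ∑ j ∈ Finset.range (i + 1),
        ((-1 : ℤ) ^ j * (i.choose j : ℤ)) • lnb ⁅lnb ⁅t, x⁆ x j, y⁆ x (i - j) =
        ∑ j ∈ Finset.range (i + 1),
        ((-1 : ℤ) ^ j * (i.choose j : ℤ)) • lnb ⁅lnb t x (j + 1), y⁆ x (i + 1 - (j + 1)) := by
      refine Finset.sum_congr rfl (fun j hj => ?_)
      rw [lnb_bracket, Nat.succ_sub_succ]
    rw [e1, e2]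
    -- now prove RHS equals A - B
    have hsplit : ∑ j ∈ Finset.range (i + 1 + 1),
        ((-1 : ℤ) ^ j * ((i + 1).choose j : ℤ)) • lnb ⁅lnb t x j, y⁆ x (i + 1 - j) =
        ∑ j ∈ Finset.range (i + 1),
          ((-1 : ℤ) ^ (j + 1) * ((i + 1).choose (j + 1) : ℤ)) • lnb ⁅lnb t x (j + 1), y⁆ x (i + 1 - (j + 1))
        + lnb ⁅lnb t x 0, y⁆ x (i + 1) := by
      rw [Finset.sum_range_succ' (fun j => ((-1 : ℤ) ^ j * ((i + 1).choose j : ℤ)) • lnb ⁅lnb t x j, y⁆ x (i + 1 - j)) (i + 1)]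
      norm_num
    have hpascal : ∑ j ∈ Finset.range (i + 1),
        ((-1 : ℤ) ^ (j + 1) * ((i + 1).choose (j + 1) : ℤ)) • lnb ⁅lnb t x (j + 1), y⁆ x (i + 1 - (j + 1)) =
        (∑ j ∈ Finset.range (i + 1),
          ((-1 : ℤ) ^ (j + 1) * ((i).choose (j + 1) : ℤ)) • lnb ⁅lnb t x (j + 1), y⁆ x (i + 1 - (j + 1)))
        - ∑ j ∈ Finset.range (i + 1),
          ((-1 : ℤ) ^ j * ((i).choose j : ℤ)) • lnb ⁅lnb t x (j + 1), y⁆ x (i + 1 - (j + 1)) := by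
      rw [← Finset.sum_sub_distrib]
      refine Finset.sum_congr rfl (fun j hj => ?_)
      rw [← sub_smul]
      congr 1
      have : ((i + 1).choose (j + 1) : ℤ) = (i.choose j : ℤ) + (i.choose (j + 1) : ℤ) := by
        exact_mod_cast congrArg (Nat.cast : ℕ → ℤ) (Nat.choose_succ_succ i j)
      rw [this]
      ring
    have hshift : ∑ j ∈ Finset.range (i + 1),
          ((-1 : ℤ) ^ (j + 1) * ((i).choose (j + 1) : ℤ)) • lnb ⁅lnb t x (j + 1), y⁆ x (i + 1 - (j + 1))
        + lnb ⁅lnb t x 0, y⁆ x (i + 1)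
        = ∑ j ∈ Finset.range (i + 1),
          ((-1 : ℤ) ^ j * ((i).choose j : ℤ)) • lnb ⁅lnb t x j, y⁆ x (i + 1 - j) := by
      have h1 := Finset.sum_range_succ' (fun j => ((-1 : ℤ) ^ j * ((i).choose j : ℤ)) • lnb ⁅lnb t x j, y⁆ x (i + 1 - j)) (i + 1)
      have h2 := Finset.sum_range_succ (fun j => ((-1 : ℤ) ^ j * ((i).choose j : ℤ)) • lnb ⁅lnb t x j, y⁆ x (i + 1 - j)) (i + 1)
      simp only [Nat.choose_succ_self, Nat.cast_zero, mul_zero, zero_smul, add_zero,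
        pow_zero, Nat.choose_zero_right, Nat.cast_one, mul_one, one_smul, Nat.sub_zero] at h1 h2
      exact h1.symm.trans h2
    rw [hsplit, hpascal, ← hshift]
    abel

end AuxProof


theorem exists_choose_ne (F : Type*) [Field F] :
    ∀ n : ℕ, 1 ≤ n → ∃ a : ℕ, 1 ≤ a ∧ a ≤ n ∧ ((Nat.choose (n - 1 + a) a : F) ≠ 0) := by
  intro n
  induction n using Nat.strong_induction_on with
  | _ n ih =>
    intro hn
    by_cases hnF : (n : F) = 0
    · by_cases hchar : ringChar F = 0
      · haveI : CharP F 0 := hchar ▸ ringChar.charP F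
        haveI : CharZero F := CharP.charP_to_charZero F
        exact absurd (Nat.cast_eq_zero.mp hnF) (by omega)
      · have hp : (ringChar F).Prime := (CharP.char_is_prime_or_zero F (ringChar F)).resolve_right hchar
        set p := ringChar F with hpdef
        haveI : CharP F p := ringChar.charP F
        haveI : Fact p.Prime := ⟨hp⟩
        have hdvd : p ∣ n := (CharP.cast_eq_zero_iff F p n).mp hnF
        have hp2 : 2 ≤ p := hp.two_le
        have hple : p ≤ n := Nat.le_of_dvd (by omega) hdvd
        have hnp : p * (n / p) = n := Nat.mul_div_cancel' hdvd
        set n' := n / p with hn'def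
        have hn'1 : 1 ≤ n' := by
          rcases Nat.eq_zero_or_pos n' with h | h
          · rw [h, Nat.mul_zero] at hnp; omega
          · exact h
        have hn'lt : n' < n := Nat.div_lt_self (by omega) (by omega)
        obtain ⟨a', ha'1, ha'n, ha'ne⟩ := ih n' hn'lt hn'1
        refine ⟨p * a', Nat.mul_pos (by omega) (by omega), ?_, ?_⟩
        · calc p * a' ≤ p * n' := Nat.mul_le_mul_left p ha'n
            _ = n := hnp
        · set Q := n' - 1 + a' with hQdef
          have hQ1 : Q + 1 = n' + a' := by omega
          have e2 : p * (Q + 1) = p * n' + p * a' := by rw [hQ1, Nat.mul_add]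
          have e4 : p * (Q + 1) = p * Q + p := by ring
          have eN : n - 1 + p * a' = p * Q + (p - 1) := by omega
          have lucas := Choose.choose_modEq_choose_mod_mul_choose_div_nat
            (p := p) (n := n - 1 + p * a') (k := p * a')
          rw [eN] at lucas
          have hmod1 : (p * Q + (p - 1)) % p = p - 1 := by
            rw [Nat.mul_add_mod]
            exact Nat.mod_eq_of_lt (by omega)
          have hdiv1 : (p * Q + (p - 1)) / p = Q := by
            rw [Nat.mul_add_div (by omega)]
            rw [Nat.div_eq_of_lt (by omega), Nat.add_zero]
          have hmod2 : (p * a') % p = 0 := Nat.mul_mod_right p a'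
          have hdiv2 : (p * a') / p = a' := Nat.mul_div_cancel_left a' (by omega)
          rw [hmod1, hdiv1, hmod2, hdiv2, Nat.choose_zero_right, one_mul] at lucas
          have hz : (((p * Q + (p - 1)).choose (p * a') : ℕ) : ZMod p) = ((Q.choose a' : ℕ) : ZMod p) :=
            (ZMod.natCast_eq_natCast_iff _ _ _).mpr lucas
          have htrans := congrArg (ZMod.castHom (dvd_refl p) F) hz
          rw [map_natCast, map_natCast] at htrans
          rw [eN, htrans]
          exact ha'ne
    · exact ⟨1, le_refl 1, hn, by
        rw [show n - 1 + 1 = n by omega, Nat.choose_one_right]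
        exact hnF⟩

theorem lnb_mem {F : Type*} [Field F] {L : Type*} [LieRing L] [LieAlgebra F L]
    {Lc : ℕ → Submodule F L} (hL : IsMaxClassGrading F L Lc)
    {a x : L} {D : ℕ} (ha : a ∈ Lc D) (hx : x ∈ Lc 1) :
    ∀ n : ℕ, lnb a x n ∈ Lc (D + n)
  | 0 => ha
  | n + 1 => hL.bracket_mem (D + n) 1 _ (lnb_mem hL ha hx n) x hx

theorem key_step {F : Type*} [Field F] {L : Type*} [LieRing L] [LieAlgebra F L]
    (x y : L) (ℓ : ℕ)
    (hfc : ∀ i : ℕ, i < ℓ - 1 → ⁅lnb y x i, y⁆ = 0)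
    (u w vR : L) (M m' : ℕ) (hm' : 1 ≤ m')
    (h1 : ∀ s, s < M - 1 → ⁅lnb u x s, y⁆ = 0)
    (h2 : lnb u x (M - 1) = w)
    (hgam : ∃ γ : F, ⁅w, x⁆ = γ • ⁅w, y⁆)
    (hconst : ∀ i, i < m' - 1 → ⁅lnb ⁅w, y⁆ x i, y⁆ = 0)
    (hvdef : vR = lnb ⁅w, y⁆ x (m' - 1))
    (hend : ⁅vR, y⁆ ≠ 0) :
    ℓ ≤ 2 * m' ∨ M ≤ m' := by
  by_contra hcon
  push_neg at hcon
  obtain ⟨hl2, hMm⟩ := hcon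
  obtain ⟨a, ha1, ham, hane⟩ := exists_choose_ne F m' hm'
  obtain ⟨γ, hγ⟩ := hgam
  set i := m' - 1 + a with hi
  set s := M - 1 - a with hs
  have haM : a ≤ M - 1 := by omega
  have hsa : s + a = M - 1 := by omega
  have hchain : ∀ t : ℕ, lnb u x (M + t) = γ • lnb ⁅w, y⁆ x t := by
    intro t
    induction t with
    | zero =>
      rw [Nat.add_zero, show M = M - 1 + 1 by omega, lnb_succ, h2, hγ]
      rfl
    | succ t iht =>
      rw [show M + (t + 1) = (M + t) + 1 by omega, lnb_succ, iht, smul_lie]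
      rfl
  have hstep1 : ⁅⁅lnb u x s, lnb y x i⁆, y⁆ = 0 := by
    have hAy : ⁅lnb y x i, y⁆ = 0 := hfc i (by omega)
    have hty : ⁅lnb u x s, y⁆ = 0 := h1 s (by omega)
    have hleib := leibniz_lie (lnb u x s) (lnb y x i) y
    rw [hAy, hty, lie_zero, lie_zero, add_zero] at hleib
    exact hleib.symm
  have hstep2 : ⁅lnb u x s, lnb y x i⁆ = ((-1 : ℤ) ^ a * (i.choose a : ℤ)) • vR := by
    rw [lie_lnb_expand x y i (lnb u x s)]
    rw [Finset.sum_eq_single_of_mem a (Finset.mem_range.mpr (by omega)) ?side]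
    case side =>
      intro j hj hja
      have hj' : j ≤ i := Nat.lt_succ_iff.mp (Finset.mem_range.mp hj)
      rw [← lnb_add]
      rcases Nat.lt_or_ge j a with hlt | hge
      · rw [h1 (s + j) (by omega), lnb_zero_elem, smul_zero]
      · have hgt : a < j := by omega
        rw [show s + j = M + (j - a - 1) by omega, hchain (j - a - 1), smul_lie,
          hconst (j - a - 1) (by omega), smul_zero, lnb_zero_elem, smul_zero]
    · rw [← lnb_add, hsa, h2, show i - a = m' - 1 by omega, ← hvdef]
  have hzero : ((-1 : ℤ) ^ a * (i.choose a : ℤ)) • ⁅vR, y⁆ = 0 := by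
    rw [← zsmul_lie, ← hstep2]
    exact hstep1
  have hF : ((((-1 : ℤ) ^ a * (i.choose a : ℤ)) : ℤ) : F) • ⁅vR, y⁆ = 0 := by
    rw [Int.cast_smul_eq_zsmul]
    exact hzero
  have hcoef : ((((-1 : ℤ) ^ a * (i.choose a : ℤ)) : ℤ) : F) ≠ 0 := by
    push_cast
    exact mul_ne_zero (pow_ne_zero _ (neg_ne_zero.mpr one_ne_zero)) hane
  rcases smul_eq_zero.mp hF with hc | hv
  · exact hcoef hc
  · exact hend hv

/-- Lemma 3.1: every constituent length satisfies `ℓ_r ≥ ℓ/2`. -/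
theorem constituent_ge_half {F : Type*} [Field F] {L : Type*} [LieRing L] [LieAlgebra F L]
    (Lc : ℕ → Submodule F L) (hL : IsMaxClassGrading F L Lc)
    (x y : L) (ℓ : ℕ) (hsetup : MaxClassSetup Lc x y ℓ)
    (l : ℕ → ℕ) (v : ℕ → L) (hseq : ConstituentSeq x y ℓ l v) :
    ∀ r : ℕ, 1 ≤ r → ℓ ≤ 2 * l r := by
  have hv_mem : ∀ r : ℕ, 1 ≤ r → ∃ D : ℕ, 1 ≤ D ∧ v r ∈ Lc D := by
    intro r hr
    induction r, hr using Nat.le_induction with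
    | base =>
      exact ⟨1 + (ℓ - 1), by omega, by rw [hseq.v_one]; exact lnb_mem hL hsetup.y_mem hsetup.x_mem (ℓ - 1)⟩
    | succ n hn ih =>
      obtain ⟨D, hD1, hDm⟩ := ih
      refine ⟨D + 1 + (l (n + 1) - 1), by omega, ?_⟩
      have h := hseq.v_def (n + 1) (by omega)
      rw [show n + 1 - 1 = n by omega] at h
      rw [h]
      exact lnb_mem hL (hL.bracket_mem D 1 _ hDm y hsetup.y_mem) hsetup.x_mem _
  have hgamma : ∀ n : ℕ, 2 ≤ n → ∃ γ : F, ⁅v n, x⁆ = γ • ⁅v n, y⁆ := by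
    intro n hn
    obtain ⟨D, hD1, hDm⟩ := hv_mem n (by omega)
    have hx' : ⁅v n, x⁆ ∈ Lc (D + 1) := hL.bracket_mem D 1 _ hDm x hsetup.x_mem
    have hy' : ⁅v n, y⁆ ∈ Lc (D + 1) := hL.bracket_mem D 1 _ hDm y hsetup.y_mem
    have hrk : Module.finrank F (Lc (D + 1)) = 1 := hL.dim_rest (D + 1) (by omega)
    have hne : (⟨⁅v n, y⁆, hy'⟩ : Lc (D + 1)) ≠ 0 := by
      intro hcontra
      exact hseq.const_end n hn (by simpa using congrArg Subtype.val hcontra)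
    obtain ⟨c, hc⟩ :=
      (finrank_eq_one_iff_of_nonzero' (⟨⁅v n, y⁆, hy'⟩ : Lc (D + 1)) hne).mp hrk ⟨⁅v n, x⁆, hx'⟩
    refine ⟨c, ?_⟩
    have hval := congrArg Subtype.val hc
    simpa using hval.symm
  intro r hr
  induction r, hr using Nat.le_induction with
  | base =>
    rw [hseq.l_one]
    omega
  | succ n hn ih =>
    have h2n : 2 ≤ n + 1 := by omega
    have hm' : 1 ≤ l (n + 1) := hseq.l_pos (n + 1) h2n
    have hconst := hseq.const (n + 1) h2n
    have hvdef := hseq.v_def (n + 1) h2n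
    have hend := hseq.const_end (n + 1) h2n
    rw [show n + 1 - 1 = n by omega] at hconst hvdef
    rcases Nat.eq_or_lt_of_le hn with h1 | h1
    · -- n = 1 : previous constituent is the first one
      have hn1 : n = 1 := h1.symm
      subst hn1
      have hv1x : ⁅v 1, x⁆ = (0 : F) • ⁅v 1, y⁆ := by
        rw [zero_smul, hseq.v_one]
        calc ⁅lnb y x (ℓ - 1), x⁆ = lnb y x (ℓ - 1 + 1) := rfl
          _ = lnb y x ℓ := by rw [show ℓ - 1 + 1 = ℓ by have := hsetup.ell_pos; omega]
          _ = 0 := hsetup.normalized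
      have hkey := key_step x y ℓ hsetup.first_const y (v 1) (v (1 + 1)) ℓ (l (1 + 1)) hm'
        hsetup.first_const hseq.v_one.symm ⟨0, hv1x⟩ hconst hvdef hend
      rcases hkey with h | h
      · exact h
      · omega
    · -- 2 ≤ n
      have hM : 1 ≤ l n := hseq.l_pos n h1
      have hkey := key_step x y ℓ hsetup.first_const ⁅v (n - 1), y⁆ (v n) (v (n + 1))
        (l n) (l (n + 1)) hm' (hseq.const n h1) (hseq.v_def n h1).symm (hgamma n h1)
        hconst hvdef hend
      rcases hkey with h | h
      · exact h
      · omega
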